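/- arXiv:1809.06504 — 5 statements merged into one kernel-verified Lean document; each statement's English description precedes it below -/
import Mathlib

section
/- Let n be a positive integer and let A and B be n×n complex Hermitian matrices such that A + tB is positive definite for every t ∈ [0,1]. Then log det(A+B) − log det(A) − tr(A⁻¹B) = −∫₀¹ t ( ∫₀¹ tr( (A+stB)⁻¹ B (A+stB)⁻¹ B ) ds ) dt, and all the traces appearing are real numbers. -/
/-!
Along the segment `t ↦ A + t • B`, Jacobi's formula gives `(log det)' = tr ((A + tB)⁻¹ B)`, and
differentiating the inverse gives `(log det)'' = -tr ((A + tB)⁻¹ B (A + tB)⁻¹ B)`; positive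
definiteness keeps the determinant a positive real number, so the real logarithm is smooth there.
The identity is then Taylor's formula with integral remainder on `[0, 1]`, the inner integral
`∫₀ᵗ f''` being rescaled to `t ∫₀¹ f''(s t) ds`. Traces of products of two Hermitian matrices
are real.
-/

open scoped ComplexOrder
open Matrix Polynomial Set

section Taylor

variable {E : Type*} [NormedAddCommGroup E] [NormedSpace ℝ E] [CompleteSpace E]

theorem sub_sub_eq_integral_smul_integral_comp_mul {f f' f'' : ℝ → E}
    (hf : ∀ t ∈ Icc (0 : ℝ) 1, HasDerivAt f (f' t) t)
    (hf' : ∀ t ∈ Icc (0 : ℝ) 1, HasDerivAt f' (f'' t) t)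
    (hf'' : ContinuousOn f'' (Icc 0 1)) :
    f 1 - f 0 - f' 0 = ∫ t in (0 : ℝ)..1, t • ∫ s in (0 : ℝ)..1, f'' (s * t) := by
  have hinner : EqOn (fun t => t • ∫ s in (0 : ℝ)..1, f'' (s * t)) (fun t => f' t - f' 0)
      (uIcc 0 1) := by
    intro t ht
    rw [uIcc_of_le zero_le_one] at ht
    have hsub : uIcc 0 t ⊆ Icc (0 : ℝ) 1 := by
      rw [uIcc_of_le ht.1]; exact Icc_subset_Icc le_rfl ht.2
    simp only [intervalIntegral.smul_integral_comp_mul_right, zero_mul, one_mul]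
    exact intervalIntegral.integral_eq_sub_of_hasDerivAt (fun u hu => hf' u (hsub hu))
      ((hf''.mono hsub).intervalIntegrable)
  have hf'_cont : ContinuousOn f' (uIcc 0 1) := by
    rw [uIcc_of_le zero_le_one]
    exact fun t ht => (hf' t ht).continuousAt.continuousWithinAt
  rw [intervalIntegral.integral_congr hinner,
    intervalIntegral.integral_sub hf'_cont.intervalIntegrable intervalIntegrable_const,
    intervalIntegral.integral_eq_sub_of_hasDerivAt
      (fun t ht => hf t (by rwa [uIcc_of_le zero_le_one] at ht)) hf'_cont.intervalIntegrable]
  simp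

end Taylor

section Jacobi

variable {𝕜 : Type*} [NontriviallyNormedField 𝕜] {ι : Type*} [Fintype ι] [DecidableEq ι]

theorem Matrix.hasDerivAt_det_one_add_smul (N : Matrix ι ι 𝕜) :
    HasDerivAt (fun z : 𝕜 => det (1 + z • N)) (trace N) 0 := by
  have h := (det (1 + (X : 𝕜[X]) • N.map C)).hasDerivAt 0
  rw [derivative_det_one_add_X_smul] at h
  convert h using 2 with z
  simp [eval_det, ← smul_eq_mul_diagonal]

theorem Matrix.hasDerivAt_det_add_smul {A B : Matrix ι ι 𝕜} {z : 𝕜} (h : IsUnit (A + z • B)) :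
    HasDerivAt (fun w : 𝕜 => det (A + w • B))
      (det (A + z • B) * trace ((A + z • B)⁻¹ * B)) z := by
  have hfactor : ∀ w : 𝕜, A + w • B = (A + z • B) * (1 + (w - z) • ((A + z • B)⁻¹ * B)) := by
    intro w
    rw [mul_add, mul_one, Matrix.mul_smul, ← Matrix.mul_assoc,
      mul_nonsing_inv _ ((isUnit_iff_isUnit_det _).mp h), Matrix.one_mul]
    module
  have h0 := hasDerivAt_det_one_add_smul ((A + z • B)⁻¹ * B)
  rw [← sub_self z] at h0
  have hdet : (fun w : 𝕜 => det (A + w • B))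
      = fun w => det (A + z • B) * det (1 + (w - z) • ((A + z • B)⁻¹ * B)) :=
    funext fun w => by rw [hfactor w, det_mul]
  rw [hdet]
  exact h0.comp_sub_const.const_mul _

end Jacobi

section Inverse

open scoped Matrix.Norms.Operator

variable {𝕜 : Type*} [RCLike 𝕜] {ι : Type*} [Fintype ι] [DecidableEq ι]

theorem HasDerivAt.matrix_inv {M : 𝕜 → Matrix ι ι 𝕜} {M' : Matrix ι ι 𝕜} {z : 𝕜}
    (hM : HasDerivAt M M' z) (hz : IsUnit (M z)) :
    HasDerivAt (fun w => (M w)⁻¹) (-((M z)⁻¹ * M' * (M z)⁻¹)) z := by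
  obtain ⟨u, hu⟩ := hz
  have h := (hu ▸ hasFDerivAt_ringInverse (𝕜 := 𝕜) u).comp_hasDerivAt z hM
  simp only [nonsing_inv_eq_ringInverse, ← hu, Ring.inverse_unit]
  exact h.congr_deriv (by simp)

omit [DecidableEq ι] in
theorem Matrix.hasDerivAt_add_smul (A B : Matrix ι ι 𝕜) (z : 𝕜) :
    HasDerivAt (fun w : 𝕜 => A + w • B) B z := by
  have h := ((hasDerivAt_id' z).smul_const B).const_add A
  rw [one_smul] at h
  exact h

theorem Matrix.hasDerivAt_trace_inv_add_smul_mul {A B : Matrix ι ι 𝕜} {z : 𝕜}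
    (h : IsUnit (A + z • B)) :
    HasDerivAt (fun w : 𝕜 => trace ((A + w • B)⁻¹ * B))
      (-trace ((A + z • B)⁻¹ * B * (A + z • B)⁻¹ * B)) z := by
  have := ((hasDerivAt_add_smul A B z).matrix_inv h).mul_const B
  refine ((traceLinearMap ι 𝕜 𝕜).toContinuousLinearMap.hasFDerivAt.comp_hasDerivAt z
    this).congr_deriv ?_
  show trace (-((A + z • B)⁻¹ * B * (A + z • B)⁻¹) * B) = _
  simp [Matrix.mul_assoc]

theorem Matrix.continuousAt_trace_inv_add_smul_mul_inv_mul {A B : Matrix ι ι 𝕜} {z : 𝕜}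
    (h : IsUnit (A + z • B)) :
    ContinuousAt (fun w : 𝕜 => trace ((A + w • B)⁻¹ * B * (A + w • B)⁻¹ * B)) z := by
  have hinv := ((hasDerivAt_add_smul A B z).matrix_inv h).continuousAt
  exact (continuous_id.matrix_trace).continuousAt.comp
    (((hinv.mul continuousAt_const).mul hinv).mul continuousAt_const)

end Inverse

section Hermitian

variable {ι : Type*} [Fintype ι]

theorem Matrix.IsHermitian.im_trace_mul {X Y : Matrix ι ι ℂ} (hX : X.IsHermitian)
    (hY : Y.IsHermitian) : (X * Y).trace.im = 0 := by
  rw [← Complex.conj_eq_iff_im, starRingEnd_apply, ← trace_conjTranspose, conjTranspose_mul,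
    hX.eq, hY.eq, trace_mul_comm]

variable [DecidableEq ι]

theorem Matrix.IsHermitian.im_trace_inv_mul {M B : Matrix ι ι ℂ} (hM : M.IsHermitian)
    (hB : B.IsHermitian) : (M⁻¹ * B).trace.im = 0 :=
  hM.inv.im_trace_mul hB

theorem Matrix.IsHermitian.im_trace_inv_mul_inv_mul {M B : Matrix ι ι ℂ} (hM : M.IsHermitian)
    (hB : B.IsHermitian) : (M⁻¹ * B * M⁻¹ * B).trace.im = 0 := by
  have hBMB : (B * M⁻¹ * B).IsHermitian := by
    simpa only [hB.eq] using isHermitian_mul_mul_conjTranspose B hM.inv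
  simpa only [Matrix.mul_assoc] using hM.inv.im_trace_mul hBMB

end Hermitian

theorem HasDerivAt.log_re {e : ℂ → ℂ} {e' : ℂ} {t : ℝ} (h : HasDerivAt e e' t)
    (hpos : 0 < e t) : HasDerivAt (fun x : ℝ => Real.log (e x).re) (e' / e t).re t := by
  obtain ⟨hre, him⟩ := Complex.pos_iff.mp hpos
  have hreal : e t = ((e t).re : ℂ) := Complex.ext rfl (by simp [him])
  rw [hreal, Complex.div_ofReal_re]
  exact h.real_of_complex.log hre.ne'

theorem Matrix.hasDerivAt_log_re_det_add_smul {ι : Type*} [Fintype ι] [DecidableEq ι]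
    {A B : Matrix ι ι ℂ} {t : ℝ} (h : 0 < det (A + (t : ℂ) • B)) :
    HasDerivAt (fun x : ℝ => Real.log (det (A + (x : ℂ) • B)).re)
      (trace ((A + (t : ℂ) • B)⁻¹ * B)).re t := by
  have hU : IsUnit (A + (t : ℂ) • B) := (isUnit_iff_isUnit_det _).mpr h.ne'.isUnit
  have := (hasDerivAt_det_add_smul hU).log_re h
  rwa [mul_div_cancel_left₀ _ h.ne'] at this

theorem logdet_second_order_remainder_general (n : ℕ)
    (A B : Matrix (Fin n) (Fin n) ℂ)
    (hA : A.IsHermitian) (hB : B.IsHermitian)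
    (hpos : ∀ t : ℝ, t ∈ Set.Icc (0:ℝ) 1 → (A + (t : ℂ) • B).PosDef) :
    (∀ s t : ℝ, s ∈ Set.Icc (0:ℝ) 1 → t ∈ Set.Icc (0:ℝ) 1 →
        (Matrix.trace ((A + ((s * t : ℝ) : ℂ) • B)⁻¹ * B *
          (A + ((s * t : ℝ) : ℂ) • B)⁻¹ * B)).im = 0) ∧
    (Matrix.trace (A⁻¹ * B)).im = 0 ∧
    Real.log ((A + B).det.re) - Real.log (A.det.re) -
        (Matrix.trace (A⁻¹ * B)).re =
      - ∫ t in (0:ℝ)..1, t *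
          ∫ s in (0:ℝ)..1,
            (Matrix.trace ((A + ((s * t : ℝ) : ℂ) • B)⁻¹ * B *
              (A + ((s * t : ℝ) : ℂ) • B)⁻¹ * B)).re := by
  have hunit : ∀ t ∈ Icc (0 : ℝ) 1, IsUnit (A + (t : ℂ) • B) := fun t ht => (hpos t ht).isUnit
  refine ⟨fun s t hs ht =>
    (hpos _ (unitInterval.mul_mem hs ht)).isHermitian.im_trace_inv_mul_inv_mul hB,
    hA.im_trace_inv_mul hB, ?_⟩
  have htaylor := sub_sub_eq_integral_smul_integral_comp_mul
    (f := fun t : ℝ => Real.log (det (A + (t : ℂ) • B)).re)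
    (f' := fun t : ℝ => (trace ((A + (t : ℂ) • B)⁻¹ * B)).re)
    (f'' := fun t : ℝ => -(trace ((A + (t : ℂ) • B)⁻¹ * B * (A + (t : ℂ) • B)⁻¹ * B)).re)
    (fun t ht => hasDerivAt_log_re_det_add_smul (hpos t ht).det_pos)
    (fun t ht => by simpa using (hasDerivAt_trace_inv_add_smul_mul (hunit t ht)).real_of_complex)
    (fun t ht => (Complex.continuous_re.continuousAt.comp
      ((continuousAt_trace_inv_add_smul_mul_inv_mul (hunit t ht)).comp
        Complex.continuous_ofReal.continuousAt)).neg.continuousWithinAt)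
  simpa [intervalIntegral.integral_neg] using htaylor

/-- **Second-order remainder identity for `log det`.**
If `A`, `B` are `n × n` complex Hermitian matrices with `A + t B` positive definite for
all `t ∈ [0,1]`, then all traces below are real and
`log det (A+B) - log det A - tr(A⁻¹B)
  = -∫₀¹ t (∫₀¹ tr((A+stB)⁻¹ B (A+stB)⁻¹ B) ds) dt`. -/
theorem logdet_second_order_remainder (n : ℕ) (hn : 0 < n)
    (A B : Matrix (Fin n) (Fin n) ℂ)
    (hA : A.IsHermitian) (hB : B.IsHermitian)
    (hpos : ∀ t : ℝ, t ∈ Set.Icc (0:ℝ) 1 → (A + (t : ℂ) • B).PosDef) :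
    (∀ s t : ℝ, s ∈ Set.Icc (0:ℝ) 1 → t ∈ Set.Icc (0:ℝ) 1 →
        (Matrix.trace ((A + ((s * t : ℝ) : ℂ) • B)⁻¹ * B *
          (A + ((s * t : ℝ) : ℂ) • B)⁻¹ * B)).im = 0) ∧
    (Matrix.trace (A⁻¹ * B)).im = 0 ∧
    Real.log ((A + B).det.re) - Real.log (A.det.re) -
        (Matrix.trace (A⁻¹ * B)).re =
      - ∫ t in (0:ℝ)..1, t *
          ∫ s in (0:ℝ)..1,
            (Matrix.trace ((A + ((s * t : ℝ) : ℂ) • B)⁻¹ * B *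
              (A + ((s * t : ℝ) : ℂ) • B)⁻¹ * B)).re :=
  logdet_second_order_remainder_general n A B hA hB hpos
end

section
/- Let n be a positive integer, K > 0 a real number, and let A and B be n×n complex Hermitian matrices such that for every t ∈ [0,1] the matrix A + tB is positive definite and (A+tB) − K⁻¹·I is positive semidefinite (i.e. all eigenvalues of A+tB are at least 1/K). Then | log det(A+B) − log det(A) − tr(A⁻¹B) | ≤ (K²/2) · Σ_{i,j} |B_{ij}|². -/
/-!
Put `f t = log det (A + t B)`. Jacobi's formula gives `f' t = tr ((A + t B)⁻¹ B)`, and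
differentiating the inverse gives `f'' t = -tr (C⁻¹ B C⁻¹ B)` with `C = A + t B`. Since
`C ≥ K⁻¹`, we have `0 ≤ C⁻¹ ≤ K`, so `0 ≤ tr (C⁻¹ (B C⁻¹ B)) ≤ K tr (B C⁻¹ B) ≤ K² tr (B²)`,
and `tr (B²) = Σ |B i j|²` for Hermitian `B`. Taylor's formula with this bound on `f''` over
`[0, 1]` gives the estimate.
-/

open Set Polynomial
open scoped ComplexOrder MatrixOrder

theorem norm_image_sub_sub_le_of_norm_deriv2_le {E : Type*} [NormedAddCommGroup E]
    [NormedSpace ℝ E] {f g h : ℝ → E} {a b M : ℝ}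
    (hf : ∀ x ∈ Icc a b, HasDerivAt f (g x) x) (hg : ∀ x ∈ Icc a b, HasDerivAt g (h x) x)
    (bound : ∀ x ∈ Icc a b, ‖h x‖ ≤ M) :
    ∀ x ∈ Icc a b, ‖f x - f a - (x - a) • g a‖ ≤ M / 2 * (x - a) ^ 2 := by
  have hg_lip : ∀ x ∈ Icc a b, ‖g x - g a‖ ≤ M * (x - a) :=
    norm_image_sub_le_of_norm_deriv_right_le_segment
      (fun x hx => (hg x hx).continuousAt.continuousWithinAt)
      (fun x hx => (hg x (Ico_subset_Icc_self hx)).hasDerivWithinAt)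
      (fun x hx => bound x (Ico_subset_Icc_self hx))
  have hrem : ∀ x ∈ Icc a b,
      HasDerivAt (fun y => f y - f a - (y - a) • g a) (g x - g a) x := fun x hx =>
    (((hf x hx).sub_const (f a)).sub
      (((hasDerivAt_id x).sub_const a).smul_const (g a))).congr_deriv (by simp)
  have hB : ∀ x, HasDerivAt (fun y => M / 2 * (y - a) ^ 2) (M * (x - a)) x := fun x =>
    ((((hasDerivAt_id x).sub_const a).pow 2).const_mul (M / 2)).congr_deriv
      (by simp only [Nat.cast_ofNat, id_eq, Nat.add_one_sub_one, pow_one, mul_one]; ring)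
  exact image_norm_le_of_norm_deriv_right_le_deriv_boundary
    (fun x hx => (hrem x hx).continuousAt.continuousWithinAt)
    (fun x hx => (hrem x (Ico_subset_Icc_self hx)).hasDerivWithinAt) (by simp) hB
    (fun x hx => hg_lip x (Ico_subset_Icc_self hx))

namespace Matrix

variable {ι : Type*} [Fintype ι] [DecidableEq ι]

section Jacobi

variable {𝕜 : Type*} [NontriviallyNormedField 𝕜]

theorem hasDerivAt_det_one_add_smul_s2 (M : Matrix ι ι 𝕜) :
    HasDerivAt (fun r : 𝕜 => det (1 + r • M)) M.trace 0 := by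
  have := (det (1 + (X : 𝕜[X]) • M.map C)).hasDerivAt 0
  rw [derivative_det_one_add_X_smul] at this
  convert this using 1
  funext r
  rw [det_one_add_smul r M]
  conv_rhs => rw [det_one_add_X_smul]
  simp [mul_comm]

theorem hasDerivAt_det_add_smul_s2 (A B : Matrix ι ι 𝕜) {z : 𝕜} (hz : IsUnit (A + z • B)) :
    HasDerivAt (fun w : 𝕜 => det (A + w • B))
      (det (A + z • B) * ((A + z • B)⁻¹ * B).trace) z := by
  set D := A + z • B
  have hD : IsUnit D.det := (isUnit_iff_isUnit_det D).1 hz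
  have hfactor : ∀ w : 𝕜, A + w • B = D * (1 + (w - z) • (D⁻¹ * B)) := fun w => by
    rw [mul_add, mul_one, Matrix.mul_smul, mul_nonsing_inv_cancel_left _ _ hD, sub_smul]
    simp only [D]
    abel
  have h0 := hasDerivAt_det_one_add_smul_s2 (D⁻¹ * B)
  rw [← sub_self z] at h0
  simpa only [hfactor, det_mul] using (h0.comp_sub_const z z).const_mul D.det

end Jacobi

variable {𝕜 : Type*} [RCLike 𝕜]

section Inverse

attribute [local instance] Matrix.linftyOpNormedRing Matrix.linftyOpNormedAlgebra

theorem hasDerivAt_inv_add_smul (A B : Matrix ι ι 𝕜) {z : 𝕜} (hz : IsUnit (A + z • B)) :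
    HasDerivAt (fun w : 𝕜 => (A + w • B)⁻¹) (-((A + z • B)⁻¹ * B * (A + z • B)⁻¹)) z := by
  have hline : HasDerivAt (fun w : 𝕜 => A + w • B) B z :=
    (((hasDerivAt_id z).smul_const B).const_add A).congr_deriv (one_smul _ _)
  have hinv := hasFDerivAt_ringInverse (𝕜 := 𝕜) hz.unit
  rw [coe_units_inv, hz.unit_spec] at hinv
  have := hinv.comp_hasDerivAt z hline
  simp only [nonsing_inv_eq_ringInverse, Function.comp_def] at this ⊢
  exact this

theorem hasDerivAt_trace_inv_add_smul_mul_s2 (A B : Matrix ι ι 𝕜) {z : 𝕜}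
    (hz : IsUnit (A + z • B)) :
    HasDerivAt (fun w : 𝕜 => ((A + w • B)⁻¹ * B).trace)
      (-((A + z • B)⁻¹ * B * (A + z • B)⁻¹ * B).trace) z := by
  have := (traceLinearMap ι 𝕜 𝕜).toContinuousLinearMap.hasFDerivAt.comp_hasDerivAt z
    ((hasDerivAt_inv_add_smul A B hz).mul_const B)
  rw [← trace_neg, ← neg_mul]
  exact this

end Inverse

theorem PosSemidef.trace_mul_nonneg {P Q : Matrix ι ι 𝕜} (hP : P.PosSemidef)
    (hQ : Q.PosSemidef) : 0 ≤ (P * Q).trace := by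
  obtain ⟨R, rfl⟩ := CStarAlgebra.nonneg_iff_eq_star_mul_self.mp hQ.nonneg
  rw [star_eq_conjTranspose, ← Matrix.mul_assoc, trace_mul_comm, ← Matrix.mul_assoc]
  exact (hP.mul_mul_conjTranspose_same R).trace_nonneg

theorem PosSemidef.trace_mul_le_of_le_smul_one {P Q : Matrix ι ι 𝕜} {c : 𝕜}
    (hP : P.PosSemidef) (hQ : Q ≤ c • 1) : (Q * P).trace ≤ c * P.trace := by
  have := PosSemidef.trace_mul_nonneg hQ hP
  rwa [sub_mul, trace_sub, smul_mul, one_mul, trace_smul, smul_eq_mul, sub_nonneg] at this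

theorem PosDef.inv_le_smul_one {C : Matrix ι ι 𝕜} {c : ℝ} (hC : C.PosDef) (hc : 0 < c)
    (h : (c : 𝕜)⁻¹ • 1 ≤ C) : C⁻¹ ≤ (c : 𝕜) • 1 := by
  obtain ⟨R, hR, hRR⟩ := CStarAlgebra.nonneg_iff_exists_isSelfAdjoint_and_eq_mul_self.mp
    hC.inv.posSemidef.nonneg
  have hRu : IsUnit R.det := isUnit_of_mul_isUnit_left <| by
    rw [← det_mul, ← hRR]; exact hC.inv.isUnit.map detMonoidHom
  have hRCR : R * C * R = 1 := by
    rw [← nonsing_inv_nonsing_inv C (hC.isUnit.map detMonoidHom), hRR, mul_inv_rev,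
      ← Matrix.mul_assoc, mul_nonsing_inv _ hRu, Matrix.one_mul, nonsing_inv_mul _ hRu]
  have hscaled : (c : 𝕜)⁻¹ • C⁻¹ ≤ 1 := by
    simpa [hRR, hRCR, Matrix.mul_smul, Matrix.smul_mul] using hR.conjugate_le_conjugate h
  have := (le_iff.mp hscaled).smul ((RCLike.ofReal_nonneg (K := 𝕜)).mpr hc.le)
  rw [smul_sub, smul_smul, mul_inv_cancel₀ (RCLike.ofReal_ne_zero.mpr hc.ne'), one_smul] at this
  exact le_iff.mpr this

theorem trace_conjTranspose_mul_self {m n : Type*} [Fintype m] [Fintype n] (A : Matrix m n 𝕜) :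
    (Aᴴ * A).trace = ((∑ i, ∑ j, ‖A i j‖ ^ 2 : ℝ) : 𝕜) := by
  simp only [trace, diag_apply, mul_apply, conjTranspose_apply, RCLike.star_def, RCLike.conj_mul]
  rw [Finset.sum_comm]
  push_cast
  rfl

theorem PosDef.abs_re_trace_inv_mul_inv_mul_le {B C : Matrix ι ι 𝕜} {c : ℝ} (hC : C.PosDef)
    (hB : B.IsHermitian) (hc : 0 < c) (h : (c : 𝕜)⁻¹ • 1 ≤ C) :
    |RCLike.re (C⁻¹ * B * C⁻¹ * B).trace| ≤ c ^ 2 * ∑ i, ∑ j, ‖B i j‖ ^ 2 := by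
  have hS := hC.inv.posSemidef
  have hSc := hC.inv_le_smul_one hc h
  have hBSB : (B * C⁻¹ * B).PosSemidef := by
    simpa [hB.eq] using hS.conjTranspose_mul_mul_same B
  have hBB : (B * B).PosSemidef := by simpa [hB.eq] using posSemidef_conjTranspose_mul_self B
  have hassoc : C⁻¹ * B * C⁻¹ * B = C⁻¹ * (B * C⁻¹ * B) := by simp only [Matrix.mul_assoc]
  have hcycle : (B * C⁻¹ * B).trace = (C⁻¹ * (B * B)).trace := by
    rw [Matrix.mul_assoc, trace_mul_comm, Matrix.mul_assoc]
  have htr : (B * B).trace = ((∑ i, ∑ j, ‖B i j‖ ^ 2 : ℝ) : 𝕜) := by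
    simpa only [hB.eq] using trace_conjTranspose_mul_self B
  have hc' : (0 : 𝕜) ≤ c := RCLike.ofReal_nonneg.mpr hc.le
  have hnonneg : 0 ≤ (C⁻¹ * B * C⁻¹ * B).trace := hassoc ▸ hS.trace_mul_nonneg hBSB
  have hle : (C⁻¹ * B * C⁻¹ * B).trace ≤ ((c ^ 2 * ∑ i, ∑ j, ‖B i j‖ ^ 2 : ℝ) : 𝕜) :=
    calc (C⁻¹ * B * C⁻¹ * B).trace ≤ c * (B * C⁻¹ * B).trace :=
          hassoc ▸ hBSB.trace_mul_le_of_le_smul_one hSc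
      _ ≤ c * (c * (B * B).trace) :=
          mul_le_mul_of_nonneg_left (hcycle ▸ hBB.trace_mul_le_of_le_smul_one hSc) hc'
      _ = _ := by rw [htr]; push_cast; ring
  rw [abs_of_nonneg (RCLike.nonneg_iff.mp hnonneg).1]
  simpa using (RCLike.le_iff_re_im.mp hle).1

theorem hasDerivAt_log_re_det_add_smul_s2 {A B : Matrix ι ι ℂ} {t : ℝ}
    (ht : (A + (t : ℂ) • B).PosDef) :
    HasDerivAt (fun s : ℝ => Real.log (A + (s : ℂ) • B).det.re)
      ((A + (t : ℂ) • B)⁻¹ * B).trace.re t := by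
  obtain ⟨hre, him⟩ := Complex.pos_iff.mp ht.det_pos
  have := (hasDerivAt_det_add_smul_s2 A B ht.isUnit).real_of_complex.log hre.ne'
  convert this using 1
  rw [Complex.mul_re, ← him, zero_mul, sub_zero, mul_div_cancel_left₀ _ hre.ne']

end Matrix

theorem logdet_second_order_bound_general (n : ℕ) (K : ℝ) (hK : 0 < K)
    (A B : Matrix (Fin n) (Fin n) ℂ)
    (hB : B.IsHermitian)
    (hpos : ∀ t : ℝ, t ∈ Set.Icc (0:ℝ) 1 → (A + (t : ℂ) • B).PosDef)
    (hev : ∀ t : ℝ, t ∈ Set.Icc (0:ℝ) 1 →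
      (A + (t : ℂ) • B - ((K : ℂ))⁻¹ • (1 : Matrix (Fin n) (Fin n) ℂ)).PosSemidef) :
    |Real.log ((A + B).det.re) - Real.log (A.det.re) -
        (Matrix.trace (A⁻¹ * B)).re| ≤
      K ^ 2 / 2 * ∑ i : Fin n, ∑ j : Fin n, ‖B i j‖ ^ 2 := by
  have hbound : ∀ t ∈ Icc (0 : ℝ) 1,
      ‖-((A + (t : ℂ) • B)⁻¹ * B * (A + (t : ℂ) • B)⁻¹ * B).trace.re‖ ≤
        K ^ 2 * ∑ i, ∑ j, ‖B i j‖ ^ 2 := fun t ht => by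
    simpa using (hpos t ht).abs_re_trace_inv_mul_inv_mul_le hB hK (hev t ht)
  have htaylor := norm_image_sub_sub_le_of_norm_deriv2_le
    (fun t ht => Matrix.hasDerivAt_log_re_det_add_smul_s2 (hpos t ht))
    (fun t ht =>
      (Matrix.hasDerivAt_trace_inv_add_smul_mul_s2 A B (hpos t ht).isUnit).real_of_complex)
    hbound 1 (right_mem_Icc.mpr zero_le_one)
  norm_num at htaylor
  linarith

/-- **Quantitative second-order bound for `log det` (matrix form of Lemma 4.1).**
If `A`, `B` are `n × n` complex Hermitian matrices such that for all `t ∈ [0,1]` the matrix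
`A + t B` is positive definite with all eigenvalues at least `1/K` (i.e.
`(A + tB) - K⁻¹ • 1` is positive semidefinite), then
`|log det (A+B) - log det A - tr(A⁻¹B)| ≤ (K²/2) Σ_{i,j} |B_{ij}|²`. -/
theorem logdet_second_order_bound (n : ℕ) (hn : 0 < n) (K : ℝ) (hK : 0 < K)
    (A B : Matrix (Fin n) (Fin n) ℂ)
    (hA : A.IsHermitian) (hB : B.IsHermitian)
    (hpos : ∀ t : ℝ, t ∈ Set.Icc (0:ℝ) 1 → (A + (t : ℂ) • B).PosDef)
    (hev : ∀ t : ℝ, t ∈ Set.Icc (0:ℝ) 1 →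
      (A + (t : ℂ) • B - ((K : ℂ))⁻¹ • (1 : Matrix (Fin n) (Fin n) ℂ)).PosSemidef) :
    |Real.log ((A + B).det.re) - Real.log (A.det.re) -
        (Matrix.trace (A⁻¹ * B)).re| ≤
      K ^ 2 / 2 * ∑ i : Fin n, ∑ j : Fin n, ‖B i j‖ ^ 2 :=
  logdet_second_order_bound_general n K hK A B hB hpos hev
end

section
/- Let λ and i be real numbers with (1/2)i² + (1/2)i − 1 = λ and i ≠ −1/2, and let j be a natural number. Then there exist real numbers b₁, …, b_{j+1} with b_{j+1} = ((j+1)(i + 1/2))⁻¹ such that the function u(x) = x^i · Σ_{m=1}^{j+1} b_m (log x)^m satisfies (1/2)x²u''(x) + x u'(x) − (1+λ)u(x) = x^i (log x)^j for all x ∈ (0,∞). -/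
/-!
Writing `u(x) = x ^ i P(log x)` conjugates the Euler operator into the constant-coefficient
operator `(1/2) P'' + (i + 1/2) P' + ((1/2) i² + (1/2) i - 1 - λ) P` in `t = log x`. At a resonant
`i` the zeroth-order term drops out, so one needs a polynomial `P` with `P(0) = 0` and
`(1/2) P'' + c P' = t ^ j`, `c = i + 1/2 ≠ 0`; it has degree `j + 1` (one more than in the
non-resonant case, whence the extra power of `log x`) and is built by induction on `j`.
-/

open Finset Polynomial Real Topology

theorem hasDerivAt_rpow_mul_comp_log (i : ℝ) {P : ℝ → ℝ} {P' y : ℝ} (hy : 0 < y)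
    (hP : HasDerivAt P P' (log y)) :
    HasDerivAt (fun z => z ^ i * P (log z)) (y ^ (i - 1) * (i * P (log y) + P')) y := by
  refine ((hasDerivAt_rpow_const (p := i) (Or.inl hy.ne')).mul
    (hP.comp y (hasDerivAt_log hy.ne'))).congr_deriv ?_
  rw [rpow_sub_one hy.ne', Function.comp_apply]
  field_simp

theorem deriv_deriv_rpow_mul_comp_log (i : ℝ) {P P' P'' : ℝ → ℝ}
    (hP : ∀ t, HasDerivAt P (P' t) t) (hP' : ∀ t, HasDerivAt P' (P'' t) t)
    {x : ℝ} (hx : 0 < x) :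
    deriv (deriv fun y => y ^ i * P (log y)) x =
      x ^ (i - 1 - 1) * ((i - 1) * (i * P (log x) + P' (log x)) +
        (i * P' (log x) + P'' (log x))) := by
  have hderiv : deriv (fun y => y ^ i * P (log y)) =ᶠ[𝓝 x]
      fun y => y ^ (i - 1) * (i * P (log y) + P' (log y)) := by
    filter_upwards [isOpen_Ioi.mem_nhds hx] with y hy
    exact (hasDerivAt_rpow_mul_comp_log i hy (hP _)).deriv
  rw [hderiv.deriv_eq]
  exact (hasDerivAt_rpow_mul_comp_log (i - 1) hx
    (((hP _).const_mul i).add (hP' _))).deriv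

theorem euler_operator_rpow_mul_comp_log (lam i : ℝ) {P P' P'' : ℝ → ℝ}
    (hP : ∀ t, HasDerivAt P (P' t) t) (hP' : ∀ t, HasDerivAt P' (P'' t) t)
    {x : ℝ} (hx : 0 < x) :
    (1/2) * x ^ 2 * deriv (deriv fun y => y ^ i * P (log y)) x
        + x * deriv (fun y => y ^ i * P (log y)) x - (1 + lam) * (x ^ i * P (log x))
      = x ^ i * ((1/2) * P'' (log x) + (i + 1/2) * P' (log x)
          + ((1/2) * i ^ 2 + (1/2) * i - 1 - lam) * P (log x)) := by
  rw [deriv_deriv_rpow_mul_comp_log i hP hP' hx,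
    (hasDerivAt_rpow_mul_comp_log i hx (hP _)).deriv,
    rpow_sub_one hx.ne', rpow_sub_one hx.ne']
  field_simp
  ring

theorem exists_half_derivative_derivative_add_C_mul_derivative_eq_X_pow
    {c : ℝ} (hc : c ≠ 0) (j : ℕ) :
    ∃ b : ℕ → ℝ, b (j + 1) = (((j : ℝ) + 1) * c)⁻¹ ∧
      C (1/2) * derivative (derivative (∑ m ∈ Icc 1 (j + 1), C (b m) * X ^ m))
        + C c * derivative (∑ m ∈ Icc 1 (j + 1), C (b m) * X ^ m) = X ^ j := by
  induction j with
  | zero =>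
    refine ⟨fun _ => c⁻¹, by simp, ?_⟩
    simp [← C_mul, hc]
  | succ j ih =>
    obtain ⟨b, -, hode⟩ := ih
    -- `a X ^ (j + 2)` produces `X ^ (j + 1)` plus a multiple of `X ^ j`, cancelled by `-k` times
    -- the solution for `X ^ j`.
    set a : ℝ := (((j : ℝ) + 2) * c)⁻¹
    set k : ℝ := ((j : ℝ) + 1) / (2 * c)
    refine ⟨fun m => if m = j + 2 then a else -k * b m, by simp only [a]; push_cast; ring_nf, ?_⟩
    have hsum : ∑ m ∈ Icc 1 (j + 1 + 1), C (if m = j + 2 then a else -k * b m) * X ^ m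
        = C (-k) * ∑ m ∈ Icc 1 (j + 1), C (b m) * X ^ m + C a * X ^ (j + 2) := by
      rw [sum_Icc_succ_top (by omega), mul_sum]
      congr 1
      · refine sum_congr rfl fun m hm => ?_
        rw [if_neg (by simp at hm; omega), C_mul, mul_assoc]
      · rw [if_pos rfl]
    have htop : C a * C (1/2) * C ((j : ℝ) + 2) * C ((j : ℝ) + 1) = C k := by
      simp only [← C_mul, a, k]
      congr 1
      field_simp
    have hnext : C a * C c * C ((j : ℝ) + 2) = 1 := by
      simp only [← C_mul, a]
      rw [← C_1]
      congr 1
      field_simp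
    rw [hsum]
    simp only [derivative_add, derivative_mul, derivative_C, derivative_X_pow, zero_mul, zero_add]
    push_cast
    rw [C_neg]
    linear_combination -C k * hode + X ^ j * htop + X ^ (j + 1) * hnext

/-- **Resonant step of the formal expansion.** If `(1/2)i² + (1/2)i - 1 = λ` and
`i ≠ -1/2`, then for every `j ∈ ℕ` there are reals `b₁, …, b_{j+1}` with
`b_{j+1} = ((j+1)(i+1/2))⁻¹` such that
`u(x) = x^i Σ_{m=1}^{j+1} b_m (log x)^m` solves
`(1/2)x²u'' + x u' - (1+λ)u = x^i (log x)^j` on `(0,∞)`. -/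
theorem resonant_formal_step (lam i : ℝ)
    (h : (1/2) * i^2 + (1/2) * i - 1 = lam) (hi : i ≠ -1/2) (j : ℕ) :
    ∃ b : ℕ → ℝ, b (j+1) = (((j : ℝ) + 1) * (i + 1/2))⁻¹ ∧
      ∀ x : ℝ, 0 < x →
        (1/2) * x^2 *
            deriv (deriv (fun y : ℝ =>
              y ^ i * ∑ m ∈ Finset.Icc 1 (j+1), b m * (Real.log y) ^ m)) x
          + x * deriv (fun y : ℝ =>
              y ^ i * ∑ m ∈ Finset.Icc 1 (j+1), b m * (Real.log y) ^ m) x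
          - (1 + lam) *
              (x ^ i * ∑ m ∈ Finset.Icc 1 (j+1), b m * (Real.log x) ^ m)
        = x ^ i * (Real.log x) ^ j := by
  obtain ⟨b, hb, hode⟩ :=
    exists_half_derivative_derivative_add_C_mul_derivative_eq_X_pow
      (c := i + 1/2) (fun hc => hi (by linarith)) j
  refine ⟨b, hb, fun x hx => ?_⟩
  set p : ℝ[X] := ∑ m ∈ Icc 1 (j + 1), C (b m) * X ^ m
  have hp : ∀ t, p.eval t = ∑ m ∈ Icc 1 (j + 1), b m * t ^ m := by
    simp [p, eval_finsetSum]
  have heuler := euler_operator_rpow_mul_comp_log lam i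
    (fun t => p.hasDerivAt t) (fun t => p.derivative.hasDerivAt t) hx
  simp only [hp, h, sub_self, zero_mul, add_zero] at heuler
  rw [heuler]
  congr 1
  simpa using congrArg (eval (log x)) hode
end

section
/- Let λ ≥ 0 be real, x₀ > 0, and let v : (0,x₀] → ℝ be twice differentiable and bounded with (1/2)x²v''(x) + x v'(x) − (1+λ)v(x) = 0 for all x ∈ (0,x₀]. Then there exists a real constant C₁ such that v(x) = C₁ x^{m̄(λ)} for all x ∈ (0,x₀]. -/
/-- The indicial root `m̄(λ) = (-1 + √(9+8λ))/2`. -/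
noncomputable def mUp (lam : ℝ) : ℝ := (-1 + Real.sqrt (9 + 8 * lam)) / 2

/-- The indicial root `m̲(λ) = (-1 - √(9+8λ))/2`. -/
noncomputable def mDown (lam : ℝ) : ℝ := (-1 - Real.sqrt (9 + 8 * lam)) / 2

/-!
The Euler operator `x²∂² + (1 - a - b) x∂ + ab` factors as `(x∂ - a)(x∂ - b)`, and the
first-order equation `x f' = k f` on an interval of `(0, ∞)` forces `f = C xᵏ`, since
`(f x⁻ᵏ)' = 0`. Solving the two first-order equations in turn writes every solution as
`A x^{m̄} + B x^{m̲}`; as `m̲ < 0 ≤ m̄`, the second term is unbounded near `0` unless `B = 0`.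
-/

open Set Filter Topology

theorem mUp_add_mDown (lam : ℝ) : mUp lam + mDown lam = -1 := by
  unfold mUp mDown
  ring

theorem mUp_mul_mDown {lam : ℝ} (hlam : -9 / 8 ≤ lam) :
    mUp lam * mDown lam = -2 * (1 + lam) := by
  have hsq := Real.sq_sqrt (show 0 ≤ 9 + 8 * lam by linarith)
  unfold mUp mDown
  linear_combination -hsq / 4

theorem mUp_nonneg {lam : ℝ} (hlam : -1 ≤ lam) : 0 ≤ mUp lam := by
  have : 1 ≤ Real.sqrt (9 + 8 * lam) := Real.one_le_sqrt.mpr (by linarith)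
  unfold mUp
  linarith

theorem mDown_neg (lam : ℝ) : mDown lam < 0 := by
  have := Real.sqrt_nonneg (9 + 8 * lam)
  unfold mDown
  linarith

theorem mDown_lt_mUp {lam : ℝ} (hlam : -9 / 8 < lam) : mDown lam < mUp lam := by
  have := Real.sqrt_pos.mpr (show 0 < 9 + 8 * lam by linarith)
  unfold mUp mDown
  linarith

namespace Convex

variable {s : Set ℝ}

theorem exists_eq_mul_rpow_of_mul_deriv_eq (hs : Convex ℝ s) (hs₀ : s ⊆ Ioi 0)
    {f f' : ℝ → ℝ} {k : ℝ} (hf : ∀ x ∈ s, HasDerivAt f (f' x) x)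
    (heq : ∀ x ∈ s, x * f' x = k * f x) : ∃ C, ∀ x ∈ s, f x = C * x ^ k := by
  have hg : ∀ x ∈ s, HasDerivWithinAt (fun y => f y * y ^ (-k)) 0 s x := by
    intro x hx
    have hx₀ : 0 < x := hs₀ hx
    refine (((hf x hx).mul (Real.hasDerivAt_rpow_const (p := -k) (Or.inl hx₀.ne'))).congr_deriv
      ?_).hasDerivWithinAt
    rw [Real.rpow_sub_one hx₀.ne']
    field_simp
    linear_combination x ^ (-k) * heq x hx
  rcases s.eq_empty_or_nonempty with rfl | ⟨y, hy⟩
  · exact ⟨0, by simp⟩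
  refine ⟨f y * y ^ (-k), fun x hx => ?_⟩
  have hconst : f x * x ^ (-k) = f y * y ^ (-k) := by
    simpa [sub_eq_zero] using
      hs.norm_image_sub_le_of_norm_hasDerivWithin_le (C := 0) hg (by simp) hy hx
  rw [← hconst, mul_assoc, ← Real.rpow_add (hs₀ hx), neg_add_cancel, Real.rpow_zero, mul_one]

theorem exists_eq_rpow_add_rpow_of_euler (hs : Convex ℝ s) (hs₀ : s ⊆ Ioi 0) {a b : ℝ}
    (hab : a ≠ b) {v : ℝ → ℝ} (hv : ∀ x ∈ s, DifferentiableAt ℝ v x)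
    (hv' : ∀ x ∈ s, DifferentiableAt ℝ (deriv v) x)
    (hode : ∀ x ∈ s,
      x ^ 2 * deriv (deriv v) x + (1 - a - b) * x * deriv v x + a * b * v x = 0) :
    ∃ A B, ∀ x ∈ s, v x = A * x ^ a + B * x ^ b := by
  obtain ⟨c, hc⟩ := hs.exists_eq_mul_rpow_of_mul_deriv_eq hs₀ (k := a)
    (f := fun x => x * deriv v x - b * v x)
    (fun x hx => ((hasDerivAt_id x).mul (hv' x hx).hasDerivAt).sub
      ((hv x hx).hasDerivAt.const_mul b))
    (fun x hx => by simp only [id]; linear_combination hode x hx)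
  have hab' : a - b ≠ 0 := sub_ne_zero.mpr hab
  -- `c / (a - b) * xᵃ` is a particular solution of `x w' - b w = c xᵃ`.
  obtain ⟨B, hB⟩ := hs.exists_eq_mul_rpow_of_mul_deriv_eq hs₀ (k := b)
    (f := fun x => v x - c / (a - b) * x ^ a)
    (fun x hx => (hv x hx).hasDerivAt.sub
      ((Real.hasDerivAt_rpow_const (Or.inl (hs₀ hx).ne')).const_mul _))
    (fun x hx => by
      have hx₀ : x ≠ 0 := (hs₀ hx).ne'
      rw [Real.rpow_sub_one hx₀]
      field_simp
      linear_combination (a - b) * hc x hx)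
  exact ⟨c / (a - b), B, fun x hx => by linear_combination hB x hx⟩

end Convex

theorem eq_zero_of_eventually_abs_mul_rpow_le {B b M : ℝ} (hb : b < 0)
    (h : ∀ᶠ x in 𝓝[>] 0, |B * x ^ b| ≤ M) : B = 0 := by
  by_contra hB
  have hunbdd : Tendsto (fun x => |B * x ^ b|) (𝓝[>] 0) atTop := by
    refine ((tendsto_rpow_neg_nhdsGT_zero hb).const_mul_atTop (abs_pos.mpr hB)).congr' ?_
    filter_upwards [self_mem_nhdsWithin] with x (hx : 0 < x)
    rw [abs_mul, abs_of_pos (Real.rpow_pos_of_pos hx b)]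
  obtain ⟨x, hle, hgt⟩ := (h.and (hunbdd.eventually_gt_atTop M)).exists
  linarith

/-- **Bounded homogeneous solutions of the Euler equation.** If `v` is twice
differentiable and bounded on `(0, x₀]` and satisfies
`(1/2)x²v'' + x v' - (1+λ)v = 0` there, then `v(x) = C₁ x^{m̄(λ)}` on `(0, x₀]`
for some constant `C₁`. -/
theorem euler_bounded_homogeneous_solutions (lam : ℝ) (hlam : 0 ≤ lam)
    (x₀ : ℝ) (hx₀ : 0 < x₀) (v : ℝ → ℝ)
    (hv1 : ∀ x ∈ Set.Ioc (0:ℝ) x₀, DifferentiableAt ℝ v x)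
    (hv2 : ∀ x ∈ Set.Ioc (0:ℝ) x₀, DifferentiableAt ℝ (deriv v) x)
    (hbdd : ∃ M : ℝ, ∀ x ∈ Set.Ioc (0:ℝ) x₀, |v x| ≤ M)
    (hode : ∀ x ∈ Set.Ioc (0:ℝ) x₀,
      (1/2) * x^2 * deriv (deriv v) x + x * deriv v x - (1 + lam) * v x = 0) :
    ∃ C₁ : ℝ, ∀ x ∈ Set.Ioc (0:ℝ) x₀, v x = C₁ * x ^ mUp lam := by
  obtain ⟨A, B, hv⟩ := (convex_Ioc 0 x₀).exists_eq_rpow_add_rpow_of_euler Ioc_subset_Ioi_self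
    (mDown_lt_mUp (lam := lam) (by linarith)).ne' hv1 hv2 fun x hx => by
      linear_combination 2 * hode x hx - x * deriv v x * mUp_add_mDown lam +
        v x * mUp_mul_mDown (lam := lam) (by linarith)
  obtain ⟨M, hM⟩ := hbdd
  have hB : B = 0 := by
    refine eq_zero_of_eventually_abs_mul_rpow_le (mDown_neg lam)
      (M := M + |A| * x₀ ^ mUp lam) ?_
    filter_upwards [Ioc_mem_nhdsGT hx₀] with x hx
    have hpow : x ^ mUp lam ≤ x₀ ^ mUp lam :=
      Real.rpow_le_rpow hx.1.le hx.2 (mUp_nonneg (by linarith))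
    calc |B * x ^ mDown lam| = |v x - A * x ^ mUp lam| := by rw [hv x hx, add_sub_cancel_left]
      _ ≤ |v x| + |A * x ^ mUp lam| := abs_sub _ _
      _ = |v x| + |A| * x ^ mUp lam := by
        rw [abs_mul, abs_of_pos (Real.rpow_pos_of_pos hx.1 _)]
      _ ≤ M + |A| * x₀ ^ mUp lam := by gcongr; exact hM x hx
  exact ⟨A, fun x hx => by simp [hv x hx, hB]⟩
end

section
/- Let λ ≥ 0 be real, x₀ ∈ (0,1), K > 0, and a > 0 with a ≠ m̄(λ). Let v : (0,x₀] → ℝ be twice continuously differentiable and bounded, and suppose (1/2)x²v''(x) + x v'(x) − (1+λ)v(x) = F(x) on (0,x₀], where F is continuous and |F(x)| ≤ K x^a for all x ∈ (0,x₀]. Then there is a constant C′ such that |v(x)| ≤ C′ x^{min(a, m̄(λ))} for all x ∈ (0,x₀]. -/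
/-- At a local minimum, the (junk-valued) second derivative is nonnegative. -/
lemma second_deriv_nonneg_of_isLocalMin {u : ℝ → ℝ} {x : ℝ}
    (hmin : IsLocalMin u x) (hd : ∀ᶠ y in nhds x, DifferentiableAt ℝ u y) :
    0 ≤ deriv (deriv u) x := by
  by_contra hneg
  push_neg at hneg
  have hdiff : DifferentiableAt ℝ (deriv u) x :=
    differentiableAt_of_deriv_ne_zero (ne_of_lt hneg)
  have hD : HasDerivAt (deriv u) (deriv (deriv u) x) x := hdiff.hasDerivAt
  have h0 : deriv u x = 0 := hmin.deriv_eq_zero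
  -- slope of deriv u tends to the negative second derivative from the right
  have hslope : Filter.Tendsto (slope (deriv u) x) (nhdsWithin x (Set.Ioi x))
      (nhds (deriv (deriv u) x)) := by
    have := hasDerivAt_iff_tendsto_slope.mp hD
    exact this.mono_left (nhdsWithin_mono x (fun y (hy : y ∈ Set.Ioi x) => Set.mem_compl_singleton_iff.mpr (ne_of_gt (Set.mem_Ioi.mp hy))))
  have hev1 : ∀ᶠ y in nhdsWithin x (Set.Ioi x), slope (deriv u) x y < 0 :=
    hslope.eventually_lt_const hneg
  have hev2 : ∀ᶠ y in nhdsWithin x (Set.Ioi x), DifferentiableAt ℝ u y :=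
    Filter.Eventually.filter_mono nhdsWithin_le_nhds hd
  have hev3 : ∀ᶠ y in nhdsWithin x (Set.Ioi x), u x ≤ u y :=
    Filter.Eventually.filter_mono nhdsWithin_le_nhds hmin
  have hall := (hev1.and (hev2.and hev3))
  rw [eventually_nhdsWithin_iff, Metric.eventually_nhds_iff] at hall
  obtain ⟨ε, hε, hP⟩ := hall
  set b := x + ε/2 with hb
  have hxb : x < b := by simp [hb]; linarith
  have hmem : ∀ y, x < y → y ≤ b → slope (deriv u) x y < 0 ∧ DifferentiableAt ℝ u y ∧ u x ≤ u y := by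
    intro y hy1 hy2
    have : dist y x < ε := by
      rw [Real.dist_eq, abs_of_pos (by linarith)]; simp [hb] at hy2; linarith
    exact hP this hy1
  -- u is strictly decreasing on [x, b]
  have hanti : StrictAntiOn u (Set.Icc x b) := by
    apply strictAntiOn_of_deriv_neg (convex_Icc x b)
    · intro y hy
      rcases eq_or_lt_of_le hy.1 with h | h
      · exact h ▸ hd.self_of_nhds.continuousAt.continuousWithinAt
      · exact ((hmem y h hy.2).2.1).continuousAt.continuousWithinAt
    · intro y hy
      rw [interior_Icc] at hy
      have h := hmem y hy.1 (le_of_lt hy.2)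
      have hs := h.1
      rw [slope_def_field, h0] at hs
      have : deriv u y / (y - x) < 0 := by
        simpa [div_eq_mul_inv] using hs
      have hyx : 0 < y - x := by linarith [hy.1]
      by_contra hcon
      push_neg at hcon
      have : 0 ≤ deriv u y / (y - x) := div_nonneg hcon (le_of_lt hyx)
      linarith
  have hlt : u b < u x := hanti (Set.left_mem_Icc.mpr (le_of_lt hxb))
    (Set.right_mem_Icc.mpr (le_of_lt hxb)) hxb
  have : u x ≤ u b := (hmem b hxb le_rfl).2.2
  linarith
/-- Maximum principle on `(0, x₀]` for the Euler operator. -/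
lemma euler_max_principle (lam x₀ : ℝ) (hlam : 0 ≤ lam) (hx0 : 0 < x₀) (u : ℝ → ℝ)
    (hc : ContinuousOn u (Set.Ioc 0 x₀))
    (hd : ∀ x ∈ Set.Ioo (0:ℝ) x₀, DifferentiableAt ℝ u x)
    (hL : ∀ x ∈ Set.Ioo (0:ℝ) x₀,
      (1/2) * x^2 * deriv (deriv u) x + x * deriv u x - (1 + lam) * u x ≤ 0)
    (hb : 0 ≤ u x₀)
    (δ : ℝ) (hδ0 : 0 < δ) (hδx : δ < x₀) (hδ : ∀ x, 0 < x → x ≤ δ → 0 < u x) :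
    ∀ x ∈ Set.Ioc (0:ℝ) x₀, 0 ≤ u x := by
  intro x hx
  rcases le_or_gt x δ with hxδ | hxδ
  · exact le_of_lt (hδ x hx.1 hxδ)
  by_contra hcon
  push_neg at hcon
  have hsub : Set.Icc δ x₀ ⊆ Set.Ioc 0 x₀ := fun y hy => ⟨lt_of_lt_of_le hδ0 hy.1, hy.2⟩
  have hcomp : IsCompact (Set.Icc δ x₀) := isCompact_Icc
  obtain ⟨z, hz, hzmin⟩ := hcomp.exists_isMinOn ⟨δ, Set.left_mem_Icc.mpr (le_of_lt hδx)⟩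
    (hc.mono hsub)
  have hzx : u z ≤ u x := hzmin ⟨le_of_lt hxδ, hx.2⟩
  have hzneg : u z < 0 := lt_of_le_of_lt hzx hcon
  have hzδ : δ < z := by
    rcases eq_or_lt_of_le hz.1 with h | h
    · exfalso; have := hδ δ hδ0 le_rfl; rw [h] at this; linarith
    · exact h
  have hzx₀ : z < x₀ := by
    rcases eq_or_lt_of_le hz.2 with h | h
    · exfalso; rw [h] at hzneg; linarith
    · exact h
  have hzIoo : z ∈ Set.Ioo (0:ℝ) x₀ := ⟨lt_trans hδ0 hzδ, hzx₀⟩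
  have hlocal : IsLocalMin u z := hzmin.isLocalMin (Icc_mem_nhds hzδ hzx₀)
  have h1 : deriv u z = 0 := hlocal.deriv_eq_zero
  have h2 : 0 ≤ deriv (deriv u) z := by
    apply second_deriv_nonneg_of_isLocalMin hlocal
    exact Filter.eventually_of_mem (isOpen_Ioo.mem_nhds hzIoo) hd
  have h3 := hL z hzIoo
  rw [h1] at h3
  have hz2 : (0:ℝ) < z^2 := pow_pos hzIoo.1 2
  nlinarith
/-- The indicial polynomial `q(p) = p(p-1)/2 + p - (1+λ)`. -/
noncomputable def qq (lam p : ℝ) : ℝ := p * (p - 1) / 2 + p - (1 + lam)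

lemma hasDerivAt_comb (c₁ p₁ c₂ p₂ c₃ p₃ σ : ℝ) (v : ℝ → ℝ) {x : ℝ} (hx : x ≠ 0)
    (hv : DifferentiableAt ℝ v x) :
    HasDerivAt (fun y : ℝ => c₁ * y ^ p₁ + c₂ * y ^ p₂ + c₃ * y ^ p₃ + σ * v y)
      (c₁ * (p₁ * x ^ (p₁ - 1)) + c₂ * (p₂ * x ^ (p₂ - 1)) + c₃ * (p₃ * x ^ (p₃ - 1))
        + σ * deriv v x) x := by
  have h := fun p : ℝ => Real.hasDerivAt_rpow_const (x := x) (p := p) (Or.inl hx)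
  exact ((((h p₁).const_mul c₁).add ((h p₂).const_mul c₂)).add ((h p₃).const_mul c₃)).add
    (hv.hasDerivAt.const_mul σ)

/-- Value of the Euler operator on a barrier combination `c₁x^{p₁}+c₂x^{p₂}+c₃x^{p₃}+σv`. -/
lemma euler_op_comb (lam x₀ : ℝ) (v F : ℝ → ℝ)
    (hv1 : ∀ x ∈ Set.Ioc (0:ℝ) x₀, DifferentiableAt ℝ v x)
    (hv2 : ∀ x ∈ Set.Ioc (0:ℝ) x₀, DifferentiableAt ℝ (deriv v) x)
    (hode : ∀ x ∈ Set.Ioc (0:ℝ) x₀,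
      (1/2) * x^2 * deriv (deriv v) x + x * deriv v x - (1 + lam) * v x = F x)
    (c₁ p₁ c₂ p₂ c₃ p₃ σ : ℝ) {x : ℝ} (hx : x ∈ Set.Ioo (0:ℝ) x₀) :
    (1/2) * x^2 * deriv (deriv (fun y : ℝ =>
        c₁ * y ^ p₁ + c₂ * y ^ p₂ + c₃ * y ^ p₃ + σ * v y)) x
      + x * deriv (fun y : ℝ => c₁ * y ^ p₁ + c₂ * y ^ p₂ + c₃ * y ^ p₃ + σ * v y) x
      - (1 + lam) * (c₁ * x ^ p₁ + c₂ * x ^ p₂ + c₃ * x ^ p₃ + σ * v x)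
    = c₁ * qq lam p₁ * x ^ p₁ + c₂ * qq lam p₂ * x ^ p₂ + c₃ * qq lam p₃ * x ^ p₃
      + σ * F x := by
  have hx0 : 0 < x := hx.1
  set u : ℝ → ℝ := fun y => c₁ * y ^ p₁ + c₂ * y ^ p₂ + c₃ * y ^ p₃ + σ * v y with hu
  have hd1 : ∀ y ∈ Set.Ioo (0:ℝ) x₀, deriv u y
      = (c₁ * p₁) * y ^ (p₁ - 1) + (c₂ * p₂) * y ^ (p₂ - 1) + (c₃ * p₃) * y ^ (p₃ - 1)
        + σ * deriv v y := by
    intro y hy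
    have := (hasDerivAt_comb c₁ p₁ c₂ p₂ c₃ p₃ σ v hy.1.ne'
      (hv1 y ⟨hy.1, hy.2.le⟩)).deriv
    rw [this]; ring
  have hev : deriv u =ᶠ[nhds x] (fun y =>
      (c₁ * p₁) * y ^ (p₁ - 1) + (c₂ * p₂) * y ^ (p₂ - 1) + (c₃ * p₃) * y ^ (p₃ - 1)
        + σ * deriv v y) :=
    Filter.eventuallyEq_of_mem (isOpen_Ioo.mem_nhds hx) hd1
  have hd2 : deriv (deriv u) x
      = (c₁ * p₁) * ((p₁ - 1) * x ^ (p₁ - 1 - 1)) + (c₂ * p₂) * ((p₂ - 1) * x ^ (p₂ - 1 - 1))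
        + (c₃ * p₃) * ((p₃ - 1) * x ^ (p₃ - 1 - 1)) + σ * deriv (deriv v) x := by
    rw [hev.deriv_eq]
    exact (hasDerivAt_comb (c₁*p₁) (p₁-1) (c₂*p₂) (p₂-1) (c₃*p₃) (p₃-1) σ (deriv v)
      hx0.ne' (hv2 x ⟨hx0, hx.2.le⟩)).deriv
  have hd1x := hd1 x hx
  have hF := hode x ⟨hx0, hx.2.le⟩
  have e1 : ∀ p : ℝ, x ^ (p - 1) = x ^ p / x := by
    intro p; rw [Real.rpow_sub hx0, Real.rpow_one]
  have e2 : ∀ p : ℝ, x ^ (p - 1 - 1) = x ^ p / (x * x) := by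
    intro p
    rw [show p - 1 - 1 = p - 2 by ring, Real.rpow_sub hx0,
      show (2:ℝ) = ((2:ℕ):ℝ) by norm_num, Real.rpow_natCast, pow_two]
  rw [hd2, hd1x, e1 p₁, e1 p₂, e1 p₃, e2 p₁, e2 p₂, e2 p₃, ← hF]
  unfold qq
  field_simp
  ring
/-- Barrier comparison: if a two-term power barrier dominates the source and the boundary
value, it dominates `|v|` on all of `(0, x₀]`. -/
lemma euler_barrier (lam : ℝ) (hlam : 0 ≤ lam)
    (x₀ : ℝ) (hx₀ : x₀ ∈ Set.Ioo (0:ℝ) 1)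
    (K a M : ℝ) (hK : 0 < K)
    (F v : ℝ → ℝ)
    (hFbd : ∀ x ∈ Set.Ioc (0:ℝ) x₀, |F x| ≤ K * x ^ a)
    (hv1 : ∀ x ∈ Set.Ioc (0:ℝ) x₀, DifferentiableAt ℝ v x)
    (hv2 : ∀ x ∈ Set.Ioc (0:ℝ) x₀, DifferentiableAt ℝ (deriv v) x)
    (hMb : ∀ x ∈ Set.Ioc (0:ℝ) x₀, |v x| ≤ M)
    (hode : ∀ x ∈ Set.Ioc (0:ℝ) x₀,
      (1/2) * x^2 * deriv (deriv v) x + x * deriv v x - (1 + lam) * v x = F x)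
    (c₁ p₁ c₂ p₂ : ℝ)
    (hq : ∀ x ∈ Set.Ioc (0:ℝ) x₀,
      c₁ * qq lam p₁ * x ^ p₁ + c₂ * qq lam p₂ * x ^ p₂ + K * x ^ a ≤ 0)
    (hpos : ∀ x ∈ Set.Ioc (0:ℝ) x₀, 0 ≤ c₁ * x ^ p₁ + c₂ * x ^ p₂)
    (hbnd : M ≤ c₁ * x₀ ^ p₁ + c₂ * x₀ ^ p₂) :
    ∀ x ∈ Set.Ioc (0:ℝ) x₀, |v x| ≤ c₁ * x ^ p₁ + c₂ * x ^ p₂ := by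
  obtain ⟨hx₀0, hx₀1⟩ := hx₀
  set s := Real.sqrt (9 + 8 * lam) with hs
  have hs2 : s ^ 2 = 9 + 8 * lam := Real.sq_sqrt (by linarith)
  have hs3 : 3 ≤ s := by
    rw [hs, show (3:ℝ) = Real.sqrt 9 by
      rw [show (9:ℝ) = 3 ^ 2 by norm_num, Real.sqrt_sq (by norm_num)]]
    exact Real.sqrt_le_sqrt (by linarith)
  have hmd : mDown lam ≤ -2 := by unfold mDown; rw [← hs]; linarith
  have hqmd : qq lam (mDown lam) = 0 := by
    unfold qq mDown; rw [← hs]; linear_combination hs2 / 8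
  have hM0 : 0 ≤ M := le_trans (abs_nonneg _) (hMb x₀ ⟨hx₀0, le_rfl⟩)
  -- main claim with the regularizing term ε x^{m̲}
  have key : ∀ ε : ℝ, 0 < ε → ∀ σ : ℝ, (σ = 1 ∨ σ = -1) → ∀ x ∈ Set.Ioc (0:ℝ) x₀,
      0 ≤ c₁ * x ^ p₁ + c₂ * x ^ p₂ + ε * x ^ (mDown lam) + σ * v x := by
    intro ε hε σ hσ
    have hσv : ∀ y : ℝ, -|v y| ≤ σ * v y := by
      intro y; rcases hσ with h | h <;> rw [h] <;>
        simp [neg_abs_le, neg_le_abs, abs_le] <;> cases abs_cases (v y) <;> linarith [neg_abs_le (v y), le_abs_self (v y)]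
    set u : ℝ → ℝ := fun y => c₁ * y ^ p₁ + c₂ * y ^ p₂ + ε * y ^ (mDown lam) + σ * v y
      with hu
    set δ : ℝ := min (x₀ / 2) (ε / (M + 1)) with hδdef
    have hδ0 : 0 < δ := lt_min (by linarith) (by positivity)
    have hδx : δ < x₀ := lt_of_le_of_lt (min_le_left _ _) (by linarith)
    apply euler_max_principle lam x₀ hlam hx₀0 u
    · -- continuity
      intro y hy
      have hcp : ∀ c p : ℝ, ContinuousWithinAt (fun z : ℝ => c * z ^ p) (Set.Ioc 0 x₀) y :=
        fun c p => ((Real.continuousAt_rpow_const y p (Or.inl hy.1.ne')).const_smul c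
          ).continuousWithinAt
      exact (((hcp c₁ p₁).add (hcp c₂ p₂)).add (hcp ε (mDown lam))).add
        ((hv1 y hy).continuousAt.const_smul σ).continuousWithinAt
    · -- differentiability
      intro y hy
      exact (hasDerivAt_comb c₁ p₁ c₂ p₂ ε (mDown lam) σ v hy.1.ne'
        (hv1 y ⟨hy.1, hy.2.le⟩)).differentiableAt
    · -- operator sign
      intro y hy
      rw [euler_op_comb lam x₀ v F hv1 hv2 hode c₁ p₁ c₂ p₂ ε (mDown lam) σ hy]
      have h1 := hq y ⟨hy.1, hy.2.le⟩
      have h2 := hFbd y ⟨hy.1, hy.2.le⟩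
      have h3 : σ * F y ≤ |F y| := by
        rcases hσ with h | h <;> rw [h]
        · simpa using le_abs_self (F y)
        · simpa using neg_le_abs (F y)
      rw [hqmd]
      nlinarith
    · -- boundary value
      have h1 : -M ≤ σ * v x₀ := le_trans (neg_le_neg (hMb x₀ ⟨hx₀0, le_rfl⟩)) (hσv x₀)
      have h2 : 0 < ε * x₀ ^ (mDown lam) :=
        mul_pos hε (Real.rpow_pos_of_pos hx₀0 _)
      have := hbnd
      simp only [hu]
      nlinarith
    · exact hδ0
    · exact hδx
    · -- positivity near 0
      intro y hy0 hyδ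
      have hyx₀ : y ≤ x₀ := le_trans hyδ (le_of_lt hδx)
      have hy1 : y < 1 := lt_of_le_of_lt (le_trans hyδ (min_le_left _ _)) (by linarith)
      have hw : 0 ≤ c₁ * y ^ p₁ + c₂ * y ^ p₂ := hpos y ⟨hy0, hyx₀⟩
      have hbar : ε / y ≤ ε * y ^ (mDown lam) := by
        have : y ^ (-1:ℝ) ≤ y ^ (mDown lam) :=
          Real.rpow_le_rpow_of_exponent_ge hy0 (le_of_lt hy1) (by linarith)
        rw [Real.rpow_neg_one] at this
        calc ε / y = ε * y⁻¹ := by rw [div_eq_mul_inv]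
        _ ≤ ε * y ^ (mDown lam) := by nlinarith
      have hMy : -M ≤ σ * v y := le_trans (neg_le_neg (hMb y ⟨hy0, hyx₀⟩)) (hσv y)
      have hεy : M + 1 ≤ ε / y := by
        have h1 : y ≤ ε / (M + 1) := le_trans hyδ (min_le_right _ _)
        rw [le_div_iff₀ hy0]
        have hM1 : (0:ℝ) < M + 1 := by linarith
        calc (M + 1) * y ≤ (M + 1) * (ε / (M + 1)) := by nlinarith
        _ = ε := by field_simp
      simp only [hu]
      nlinarith
  -- remove the regularizing term
  intro x hx
  have hxp : 0 < x ^ (mDown lam) := Real.rpow_pos_of_pos hx.1 _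
  apply le_of_forall_pos_le_add
  intro η hη
  set ε := η / x ^ (mDown lam) with hε
  have hε0 : 0 < ε := by positivity
  have h1 := key ε hε0 1 (Or.inl rfl) x hx
  have h2 := key ε hε0 (-1) (Or.inr rfl) x hx
  have hεx : ε * x ^ (mDown lam) = η := div_mul_cancel₀ η (ne_of_gt hxp)
  rw [abs_le]
  constructor <;> nlinarith
/-- **Decay-transfer estimate (non-resonant case).** Let `λ ≥ 0`, `x₀ ∈ (0,1)`, `K > 0`,
`a > 0` with `a ≠ m̄(λ)`. If `v` is a bounded `C²` solution of
`(1/2)x²v'' + x v' - (1+λ)v = F` on `(0, x₀]` with `F` continuous and `|F(x)| ≤ K x^a`,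
then `|v(x)| ≤ C' x^{min(a, m̄(λ))}` on `(0, x₀]` for some constant `C'`. -/
theorem euler_decay_transfer (lam : ℝ) (hlam : 0 ≤ lam)
    (x₀ : ℝ) (hx₀ : x₀ ∈ Set.Ioo (0:ℝ) 1)
    (K a : ℝ) (hK : 0 < K) (ha : 0 < a) (hne : a ≠ mUp lam)
    (F v : ℝ → ℝ)
    (hF : ContinuousOn F (Set.Ioc 0 x₀))
    (hFbd : ∀ x ∈ Set.Ioc (0:ℝ) x₀, |F x| ≤ K * x ^ a)
    (hv1 : ∀ x ∈ Set.Ioc (0:ℝ) x₀, DifferentiableAt ℝ v x)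
    (hv2 : ∀ x ∈ Set.Ioc (0:ℝ) x₀, DifferentiableAt ℝ (deriv v) x)
    (hv3 : ContinuousOn (deriv (deriv v)) (Set.Ioc 0 x₀))
    (hvbdd : ∃ M : ℝ, ∀ x ∈ Set.Ioc (0:ℝ) x₀, |v x| ≤ M)
    (hode : ∀ x ∈ Set.Ioc (0:ℝ) x₀,
      (1/2) * x^2 * deriv (deriv v) x + x * deriv v x - (1 + lam) * v x = F x) :
    ∃ C' : ℝ, ∀ x ∈ Set.Ioc (0:ℝ) x₀,
      |v x| ≤ C' * x ^ min a (mUp lam) := by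
  obtain ⟨hx₀0, hx₀1⟩ := hx₀
  obtain ⟨M, hMb⟩ := hvbdd
  have hM0 : 0 ≤ M := le_trans (abs_nonneg _) (hMb x₀ ⟨hx₀0, le_rfl⟩)
  obtain ⟨s, hs⟩ : ∃ s : ℝ, s = Real.sqrt (9 + 8 * lam) := ⟨_, rfl⟩
  have hs2 : s ^ 2 = 9 + 8 * lam := by rw [hs]; exact Real.sq_sqrt (by linarith)
  have hs3 : 3 ≤ s := by
    rw [hs, show (3:ℝ) = Real.sqrt 9 by
      rw [show (9:ℝ) = 3 ^ 2 by norm_num, Real.sqrt_sq (by norm_num)]]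
    exact Real.sqrt_le_sqrt (by linarith)
  have hmup : mUp lam = (-1 + s) / 2 := by unfold mUp; rw [hs]
  have hmup1 : 1 ≤ mUp lam := by rw [hmup]; linarith
  have hqmu : qq lam (mUp lam) = 0 := by
    unfold qq; rw [hmup]; linear_combination hs2 / 8
  rcases lt_or_gt_of_ne hne with hlt | hgt
  · -- case a < m̄ : min = a, q(a) < 0
    have hmin : min a (mUp lam) = a := min_eq_left (le_of_lt hlt)
    have hqa : qq lam a < 0 := by
      unfold qq
      rw [hmup] at hlt
      nlinarith
    have hx₀a : (0:ℝ) < x₀ ^ a := Real.rpow_pos_of_pos hx₀0 a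
    obtain ⟨A, hA⟩ : ∃ A : ℝ, A = K / (-qq lam a) + (M + 1) / x₀ ^ a := ⟨_, rfl⟩
    have hA1 : 0 < K / (-qq lam a) := div_pos hK (by linarith)
    have hA2 : 0 < (M + 1) / x₀ ^ a := div_pos (by linarith) hx₀a
    have hA0 : 0 < A := by rw [hA]; linarith
    have hAq : A * qq lam a ≤ -K := by
      rw [hA]
      have e : K / (-qq lam a) * qq lam a = -K := by
        have h0 : K / (-qq lam a) * (-qq lam a) = K := div_mul_cancel₀ K (by linarith)
        nlinarith [h0]
      have h2 : (M + 1) / x₀ ^ a * qq lam a ≤ 0 :=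
        mul_nonpos_iff.mpr (Or.inl ⟨le_of_lt hA2, le_of_lt hqa⟩)
      nlinarith
    have hbar := euler_barrier lam hlam x₀ ⟨hx₀0, hx₀1⟩ K a M hK F v hFbd hv1 hv2 hMb hode
      A a 0 0
      (by
        intro x hx
        have hxa : (0:ℝ) < x ^ a := Real.rpow_pos_of_pos hx.1 a
        have h5 : A * qq lam a * x ^ a ≤ -K * x ^ a :=
          mul_le_mul_of_nonneg_right hAq (le_of_lt hxa)
        simp only [zero_mul]
        linarith)
      (by
        intro x hx
        have hxa : (0:ℝ) < x ^ a := Real.rpow_pos_of_pos hx.1 a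
        have : 0 ≤ A * x ^ a := mul_nonneg (le_of_lt hA0) (le_of_lt hxa)
        simp only [zero_mul]
        linarith)
      (by
        have h1 : (M + 1) / x₀ ^ a * x₀ ^ a = M + 1 := div_mul_cancel₀ _ (ne_of_gt hx₀a)
        have h4 : 0 ≤ K / (-qq lam a) * x₀ ^ a := mul_nonneg (le_of_lt hA1) (le_of_lt hx₀a)
        rw [hA]
        simp only [zero_mul]
        nlinarith)
    refine ⟨A, fun x hx => ?_⟩
    have h := hbar x hx
    simp only [zero_mul, add_zero] at h
    rw [hmin]
    exact h
  · -- case a > m̄ : min = m̄, q(a) > 0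
    have hmin : min a (mUp lam) = mUp lam := min_eq_right (le_of_lt hgt)
    have hqa : 0 < qq lam a := by
      unfold qq
      rw [hmup] at hgt
      nlinarith
    obtain ⟨B, hB⟩ : ∃ B : ℝ, B = K / qq lam a := ⟨_, rfl⟩
    have hB0 : 0 < B := by rw [hB]; exact div_pos hK hqa
    have hx₀m : (0:ℝ) < x₀ ^ (mUp lam) := Real.rpow_pos_of_pos hx₀0 _
    obtain ⟨A, hA⟩ : ∃ A : ℝ, A = B + (M + B) / x₀ ^ (mUp lam) := ⟨_, rfl⟩
    have ht0 : 0 ≤ (M + B) / x₀ ^ (mUp lam) := div_nonneg (by linarith) (le_of_lt hx₀m)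
    have hAB : B ≤ A := by rw [hA]; linarith
    have hBK : B * qq lam a = K := by rw [hB]; exact div_mul_cancel₀ K (ne_of_gt hqa)
    have hbar := euler_barrier lam hlam x₀ ⟨hx₀0, hx₀1⟩ K a M hK F v hFbd hv1 hv2 hMb hode
      A (mUp lam) (-B) a
      (by
        intro x hx
        have heq : A * qq lam (mUp lam) * x ^ (mUp lam) + (-B) * qq lam a * x ^ a
            + K * x ^ a = 0 := by
          rw [hqmu]; linear_combination (-(x ^ a)) * hBK
        linarith)
      (by
        intro x hx
        have hxm : (0:ℝ) < x ^ (mUp lam) := Real.rpow_pos_of_pos hx.1 _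
        have hle : x ^ a ≤ x ^ (mUp lam) :=
          Real.rpow_le_rpow_of_exponent_ge hx.1 (le_of_lt (lt_of_le_of_lt hx.2 hx₀1))
            (le_of_lt hgt)
        have h1 : B * x ^ a ≤ B * x ^ (mUp lam) :=
          mul_le_mul_of_nonneg_left hle (le_of_lt hB0)
        have h2 : B * x ^ (mUp lam) ≤ A * x ^ (mUp lam) :=
          mul_le_mul_of_nonneg_right hAB (le_of_lt hxm)
        linarith)
      (by
        have h1 : (M + B) / x₀ ^ (mUp lam) * x₀ ^ (mUp lam) = M + B :=
          div_mul_cancel₀ _ (ne_of_gt hx₀m)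
        have h2 : x₀ ^ a ≤ 1 := Real.rpow_le_one (le_of_lt hx₀0) (le_of_lt hx₀1)
          (le_of_lt ha)
        have h3 : B * x₀ ^ a ≤ B := mul_le_of_le_one_right (le_of_lt hB0) h2
        have h4 : 0 ≤ B * x₀ ^ (mUp lam) := mul_nonneg (le_of_lt hB0) (le_of_lt hx₀m)
        rw [hA]
        nlinarith)
    refine ⟨A, fun x hx => ?_⟩
    have h := hbar x hx
    have hxa : (0:ℝ) < x ^ a := Real.rpow_pos_of_pos hx.1 a
    have h5 : 0 < B * x ^ a := mul_pos hB0 hxa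
    rw [hmin]
    linarith
end
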